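/- arXiv:2104.01391 — 2 statements merged into one kernel-verified Lean document; each statement's English description precedes it below -/
import Mathlib

section
/- For any Dyck path λ of size n, the product ∏_{c ∈ Chord(λ)} [l(c)] divides [n]! in ℤ[q], where the chords are given by the parenthesis matching of λ and l(c) is the number of chords weakly nested inside c. -/
open Polynomial

/-- The `q`-integer `[n] = ∑_{i=0}^{n-1} q^i` in `ℤ[q]`. -/
noncomputable def qIntP (n : ℕ) : Polynomial ℤ := ∑ i ∈ Finset.range n, X ^ i

/-- The `q`-factorial `[n]! = ∏_{i=1}^{n} [i]` in `ℤ[q]`. -/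
noncomputable def qFactP (n : ℕ) : Polynomial ℤ := ∏ i ∈ Finset.Icc 1 n, qIntP i

/-- Height of the lattice path after the first `k` steps of `w`
(`true` = up step `U`, `false` = down step `D`). -/
def prefixHeight (w : List Bool) (k : ℕ) : ℤ :=
  ((w.take k).count true : ℤ) - ((w.take k).count false : ℤ)

/-- `w` is a Dyck word of size `n`: a balanced word of length `2n` in `U,D`
all of whose prefix heights are nonnegative. -/
def IsDyckWord (w : List Bool) (n : ℕ) : Prop :=
  w.length = 2 * n ∧ w.count true = n ∧ ∀ k ≤ w.length, 0 ≤ prefixHeight w k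

/-- Positions `i < j` form a chord of `w`: the `U` at position `i` is matched with
the `D` at position `j` in the parenthesis matching, i.e. the heights before step `i`
and after step `j` agree and the path stays strictly above that level in between. -/
def IsChord (w : List Bool) (i j : ℕ) : Prop :=
  i < j ∧ j < w.length ∧ w.getD i false = true ∧ w.getD j true = false ∧
    prefixHeight w i = prefixHeight w (j + 1) ∧
    ∀ k, i < k → k ≤ j → prefixHeight w i < prefixHeight w k

open scoped Classical in
/-- The set of chords of `w`, given by the matching of parentheses. -/
noncomputable def chords (w : List Bool) : Finset (ℕ × ℕ) :=
  (Finset.range w.length ×ˢ Finset.range w.length).filter fun p => IsChord w p.1 p.2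

open scoped Classical in
/-- The length `l(c)` of a chord `c`: the number of chords weakly nested inside `c`,
i.e. one plus the number of chords strictly nested inside `c`. -/
noncomputable def chordLength (w : List Bool) (c : ℕ × ℕ) : ℕ :=
  ((chords w).filter fun p => c.1 ≤ p.1 ∧ p.2 ≤ c.2).card

/-!
A nonempty Dyck path factors at its first return to the axis as `U w₁ D w₂`, with `w₁` and `w₂`
Dyck paths of sizes `n₁ + n₂ = n - 1`. Its chords are the outer chord, whose length is `n₁ + 1`
since it encloses exactly the `n₁` chords of `w₁`, together with the chords of `w₁` and of `w₂`
shifted into place, whose lengths do not change. By induction the product is therefore a divisor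
of `[n₁ + 1] [n₁]! [n₂]! = [n₁ + 1]! [n₂]!`, and `[a]! [b]! ∣ [a + b]!` follows from the
`q`-Pascal rule.
-/

lemma qIntP_add (a b : ℕ) : qIntP (a + b) = qIntP a + X ^ a * qIntP b := by
  simp only [qIntP, Finset.sum_range_add, Finset.mul_sum, pow_add]

@[simp]
lemma qFactP_zero : qFactP 0 = 1 := by
  simp [qFactP]

lemma qFactP_succ (n : ℕ) : qFactP (n + 1) = qFactP n * qIntP (n + 1) :=
  Finset.prod_Icc_succ_top (by omega) _

/-- The `q`-Pascal rule `[a + b + 2] = [a + 1] + q^(a + 1) [b + 1]` splits `[a + b + 2]!` into two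
terms, each divisible by `[a + 1]! [b + 1]!` by induction on `a + b`. -/
lemma qFactP_mul_qFactP_dvd (a b : ℕ) : qFactP a * qFactP b ∣ qFactP (a + b) := by
  induction hs : a + b generalizing a b with
  | zero =>
    obtain ⟨rfl, rfl⟩ : a = 0 ∧ b = 0 := by omega
    simp
  | succ s ih =>
    obtain _ | a := a
    · simp [← hs]
    obtain _ | b := b
    · simp [← hs]
    have hsplit : qFactP (s + 1) =
        qIntP (a + 1) * qFactP s + X ^ (a + 1) * (qIntP (b + 1) * qFactP s) := by
      rw [qFactP_succ, show s + 1 = a + 1 + (b + 1) by omega, qIntP_add]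
      ring
    rw [hsplit]
    refine dvd_add ?_ (Dvd.dvd.mul_left ?_ _)
    · rw [qFactP_succ a, mul_right_comm, mul_comm _ (qIntP _)]
      exact mul_dvd_mul_left _ (ih a (b + 1) (by omega))
    · rw [qFactP_succ b, ← mul_assoc, mul_comm _ (qIntP _)]
      exact mul_dvd_mul_left _ (ih (a + 1) b (by omega))

@[simp]
lemma prefixHeight_zero (w : List Bool) : prefixHeight w 0 = 0 := by
  simp [prefixHeight]

lemma prefixHeight_append_of_le_length {u v : List Bool} {k : ℕ} (hk : k ≤ u.length) :
    prefixHeight (u ++ v) k = prefixHeight u k := by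
  rw [prefixHeight, prefixHeight, List.take_append_of_le_length hk]

lemma prefixHeight_append_add_length (u v : List Bool) (k : ℕ) :
    prefixHeight (u ++ v) (k + u.length) = prefixHeight u u.length + prefixHeight v k := by
  simp only [prefixHeight, List.take_append, List.take_length,
    List.take_of_length_le (Nat.le_add_left u.length k), Nat.add_sub_cancel, List.count_append]
  push_cast
  ring

lemma prefixHeight_singleton (b : Bool) : prefixHeight [b] 1 = if b then 1 else -1 := by
  cases b <;> rfl

lemma prefixHeight_cons_succ (b : Bool) (v : List Bool) (k : ℕ) :
    prefixHeight (b :: v) (k + 1) = (if b then 1 else -1) + prefixHeight v k := by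
  have := prefixHeight_append_add_length [b] v k
  rwa [List.singleton_append, List.length_singleton, prefixHeight_singleton] at this

lemma prefixHeight_length (w : List Bool) :
    prefixHeight w w.length = w.count true - w.count false := by
  rw [prefixHeight, List.take_length]

lemma IsDyckWord.prefixHeight_length_eq_zero {w : List Bool} {n : ℕ} (hw : IsDyckWord w n) :
    prefixHeight w w.length = 0 := by
  obtain ⟨hlen, hcount, -⟩ := hw
  have := w.count_true_add_count_false
  rw [prefixHeight_length]
  omega

lemma isDyckWord_count_true {w : List Bool} (hend : prefixHeight w w.length = 0)
    (hnonneg : ∀ k ≤ w.length, 0 ≤ prefixHeight w k) : IsDyckWord w (w.count true) := by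
  have := w.count_true_add_count_false
  rw [prefixHeight_length] at hend
  exact ⟨by omega, rfl, hnonneg⟩

lemma exists_eq_true_cons_append_false {u : List Bool} (hne : u ≠ [])
    (hend : prefixHeight u u.length = 0)
    (hpos : ∀ k, 0 < k → k < u.length → 0 < prefixHeight u k) :
    ∃ w₁, u = true :: (w₁ ++ [false]) ∧ IsDyckWord w₁ (w₁.count true) := by
  obtain ⟨b, t, rfl⟩ := List.exists_cons_of_ne_nil hne
  obtain rfl | ⟨t, b', rfl⟩ := t.eq_nil_or_concat
  · cases b <;> simp [prefixHeight_cons_succ] at hend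
  simp only [List.concat_eq_append, List.length_cons, List.length_append, List.length_nil,
    zero_add] at hend hpos
  have hheight : ∀ k ≤ t.length,
      prefixHeight (b :: (t ++ [b'])) (k + 1) = (if b then 1 else -1) + prefixHeight t k :=
    fun k hk => by rw [prefixHeight_cons_succ, prefixHeight_append_of_le_length hk]
  have hlast := prefixHeight_append_add_length t [b'] 1
  rw [prefixHeight_cons_succ, add_comm t.length 1, hlast] at hend
  have hfirst := hpos 1 one_pos (by omega)
  have hbefore := hpos (t.length + 1) (by omega) (by omega)
  rw [hheight 0 (Nat.zero_le _), prefixHeight_zero] at hfirst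
  rw [hheight _ le_rfl] at hbefore
  rw [prefixHeight_singleton] at hend
  cases b <;> cases b' <;> simp at hfirst hend hbefore hheight ⊢
  · refine isDyckWord_count_true (by omega) fun k hk => ?_
    have := hpos (k + 1) (by omega) (by omega)
    rw [hheight k hk] at this
    omega
  · omega

lemma IsDyckWord.exists_first_return {w : List Bool} {n : ℕ} (hw : IsDyckWord w n) (hn : 0 < n) :
    ∃ m, 0 < m ∧ m ≤ w.length ∧ prefixHeight w m = 0 ∧
      ∀ k, 0 < k → k < m → 0 < prefixHeight w k := by
  classical
  have hlen : 0 < w.length := by have := hw.1; omega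
  have hex : ∃ m, 0 < m ∧ prefixHeight w m = 0 := ⟨w.length, hlen, hw.prefixHeight_length_eq_zero⟩
  obtain ⟨hm, hmz⟩ := Nat.find_spec hex
  have hmlen := Nat.find_min' hex ⟨hlen, hw.prefixHeight_length_eq_zero⟩
  exact ⟨Nat.find hex, hm, hmlen, hmz, fun k hk hkm =>
    (hw.2.2 k (by omega)).lt_of_ne' fun h => Nat.find_min hex hkm ⟨hk, h⟩⟩

lemma IsDyckWord.exists_eq_true_cons_append {w : List Bool} {n : ℕ} (hw : IsDyckWord w (n + 1)) :
    ∃ w₁ w₂ n₁ n₂, w = true :: (w₁ ++ false :: w₂) ∧ IsDyckWord w₁ n₁ ∧ IsDyckWord w₂ n₂ ∧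
      n = n₁ + n₂ := by
  obtain ⟨m, hm, hmlen, hmz, hpos⟩ := hw.exists_first_return n.succ_pos
  obtain ⟨u, v, rfl, rfl⟩ : ∃ u v, w = u ++ v ∧ u.length = m :=
    ⟨w.take m, w.drop m, (List.take_append_drop m w).symm, List.length_take_of_le hmlen⟩
  have hu : ∀ k ≤ u.length, prefixHeight (u ++ v) k = prefixHeight u k :=
    fun k hk => prefixHeight_append_of_le_length hk
  rw [hu _ le_rfl] at hmz
  have hv : ∀ k, prefixHeight (u ++ v) (k + u.length) = prefixHeight v k := fun k => by
    rw [prefixHeight_append_add_length, hmz, zero_add]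
  obtain ⟨w₁, rfl, h₁⟩ := exists_eq_true_cons_append_false (List.ne_nil_of_length_pos hm) hmz
    fun k hk hkm => hu k hkm.le ▸ hpos k hk hkm
  obtain ⟨hlen, hcount, hnonneg⟩ := hw
  have h₂ : IsDyckWord v (v.count true) := by
    refine isDyckWord_count_true ?_ fun k hk => hv k ▸ hnonneg _ ?_
    · have := (IsDyckWord.prefixHeight_length_eq_zero ⟨hlen, hcount, hnonneg⟩)
      rwa [List.length_append, add_comm, hv] at this
    · simp only [List.length_append] at hk ⊢
      omega
  refine ⟨w₁, v, _, _, by simp, h₁, h₂, ?_⟩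
  simp [List.count_append] at hcount
  omega

@[elab_as_elim]
lemma IsDyckWord.induction {motive : List Bool → ℕ → Prop} (nil : motive [] 0)
    (node : ∀ w₁ w₂ n₁ n₂, IsDyckWord w₁ n₁ → IsDyckWord w₂ n₂ → motive w₁ n₁ → motive w₂ n₂ →
      motive (true :: (w₁ ++ false :: w₂)) (n₁ + n₂ + 1))
    {w : List Bool} {n : ℕ} (hw : IsDyckWord w n) : motive w n := by
  induction n using Nat.strong_induction_on generalizing w with
  | _ n ih =>
    obtain _ | n := n
    · obtain rfl : w = [] := List.eq_nil_of_length_eq_zero hw.1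
      exact nil
    obtain ⟨w₁, w₂, n₁, n₂, rfl, h₁, h₂, rfl⟩ := hw.exists_eq_true_cons_append
    exact node _ _ _ _ h₁ h₂ (ih _ (by omega) h₁) (ih _ (by omega) h₂)

lemma mem_chords {w : List Bool} {p : ℕ × ℕ} : p ∈ chords w ↔ IsChord w p.1 p.2 := by
  simp only [chords, Finset.mem_filter, Finset.mem_product, Finset.mem_range, and_iff_right_iff_imp]
  exact fun h => ⟨h.1.trans h.2.1, h.2.1⟩

lemma isChord_append_of_lt_length {u v : List Bool} {i j : ℕ} (hj : j < u.length) :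
    IsChord (u ++ v) i j ↔ IsChord u i j := by
  have hph : ∀ k ≤ j + 1, prefixHeight (u ++ v) k = prefixHeight u k :=
    fun k hk => prefixHeight_append_of_le_length (by omega)
  refine and_congr_right fun hij => ?_
  rw [List.getD_append _ _ _ _ (hij.trans hj), List.getD_append _ _ _ _ hj, hph i (by omega),
    hph (j + 1) le_rfl]
  have hmid : (∀ k, i < k → k ≤ j → prefixHeight u i < prefixHeight (u ++ v) k) ↔
      ∀ k, i < k → k ≤ j → prefixHeight u i < prefixHeight u k :=
    forall_congr' fun k => imp_congr_right fun _ => imp_congr_right fun hk => by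
      rw [hph k (by omega)]
  rw [hmid]
  exact and_congr_left' (iff_of_true (by rw [List.length_append]; omega) hj)

lemma isChord_append_add_length_iff {u v : List Bool} {i j : ℕ} :
    IsChord (u ++ v) (i + u.length) (j + u.length) ↔ IsChord v i j := by
  have hget : ∀ k d, (u ++ v).getD (k + u.length) d = v.getD k d := fun k d => by
    rw [List.getD_append_right _ _ _ _ (Nat.le_add_left _ _), Nat.add_sub_cancel]
  have hph := prefixHeight_append_add_length u v
  have hmid : (∀ k, i + u.length < k → k ≤ j + u.length →
        prefixHeight u u.length + prefixHeight v i < prefixHeight (u ++ v) k) ↔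
      ∀ k, i < k → k ≤ j → prefixHeight v i < prefixHeight v k := by
    refine ⟨fun h k hik hkj => ?_, fun h k hik hkj => ?_⟩
    · simpa [hph] using h (k + u.length) (by omega) (by omega)
    · obtain ⟨k, rfl⟩ := Nat.exists_eq_add_of_le' (show u.length ≤ k by omega)
      simpa [hph] using h k (by omega) (by omega)
  simp only [IsChord, hget, hmid, List.length_append, add_right_comm j u.length 1, hph,
    add_lt_add_iff_right, add_right_inj, add_comm u.length v.length]

lemma isChord_cons_succ_iff {b : Bool} {v : List Bool} {i j : ℕ} :
    IsChord (b :: v) (i + 1) (j + 1) ↔ IsChord v i j :=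
  isChord_append_add_length_iff (u := [b])

def shiftPair (s : ℕ) : ℕ × ℕ ↪ ℕ × ℕ := (addRightEmbedding s).prodMap (addRightEmbedding s)

@[simp]
lemma shiftPair_apply (s : ℕ) (p : ℕ × ℕ) : shiftPair s p = (p.1 + s, p.2 + s) := rfl

lemma bounds_of_mem_map_shiftPair_chords {w : List Bool} {s : ℕ} {p : ℕ × ℕ}
    (hp : p ∈ (chords w).map (shiftPair s)) : s ≤ p.1 ∧ p.1 < p.2 ∧ p.2 < w.length + s := by
  obtain ⟨c, hc, rfl⟩ := Finset.mem_map.1 hp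
  obtain ⟨h₁, h₂, -⟩ := mem_chords.1 hc
  simp only [shiftPair_apply]
  omega

section Node

variable {w₁ w₂ : List Bool} {n₁ : ℕ}

lemma prefixHeight_node_succ {k : ℕ} (hk : k ≤ w₁.length) :
    prefixHeight (true :: (w₁ ++ false :: w₂)) (k + 1) = 1 + prefixHeight w₁ k := by
  rw [prefixHeight_cons_succ, prefixHeight_append_of_le_length hk, if_pos rfl]

lemma one_le_prefixHeight_node (h₁ : IsDyckWord w₁ n₁) {k : ℕ} (hk : 0 < k)
    (hk' : k ≤ w₁.length + 1) : 1 ≤ prefixHeight (true :: (w₁ ++ false :: w₂)) k := by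
  obtain ⟨k, rfl⟩ := Nat.exists_eq_add_of_le' hk
  rw [prefixHeight_node_succ (by omega)]
  have := h₁.2.2 k (by omega)
  omega

lemma prefixHeight_node_length_add_two (h₁ : IsDyckWord w₁ n₁) :
    prefixHeight (true :: (w₁ ++ false :: w₂)) (w₁.length + 2) = 0 := by
  rw [prefixHeight_cons_succ, add_comm w₁.length 1, prefixHeight_append_add_length,
    h₁.prefixHeight_length_eq_zero]
  simp [prefixHeight]

lemma getD_node_length_add_one (d : Bool) :
    (true :: (w₁ ++ false :: w₂)).getD (w₁.length + 1) d = false := by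
  rw [List.getD_cons_succ, List.getD_append_right _ _ _ _ le_rfl, Nat.sub_self]
  rfl

lemma isChord_node_root (h₁ : IsDyckWord w₁ n₁) :
    IsChord (true :: (w₁ ++ false :: w₂)) 0 (w₁.length + 1) :=
  ⟨by omega, by simp, rfl, getD_node_length_add_one _,
    by rw [prefixHeight_zero, prefixHeight_node_length_add_two h₁],
    fun k hk hk' => by
      rw [prefixHeight_zero]
      exact one_le_prefixHeight_node h₁ hk hk'⟩

/-- The path is at height `0` right after the `D` matching the first `U`, and at height at least `1`
strictly between the two, so no chord can straddle that `D`. -/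
lemma IsChord.node_cases (h₁ : IsDyckWord w₁ n₁) {i j : ℕ}
    (hc : IsChord (true :: (w₁ ++ false :: w₂)) i j) :
    (i = 0 ∧ j = w₁.length + 1) ∨ (0 < i ∧ j ≤ w₁.length) ∨ w₁.length + 2 ≤ i := by
  obtain ⟨hij, -, hi, -, he, hmid⟩ := hc
  have hret := prefixHeight_node_length_add_two (w₂ := w₂) h₁
  have hpos : ∀ {k}, 0 < k → k ≤ w₁.length + 1 → 1 ≤ prefixHeight _ k :=
    one_le_prefixHeight_node (w₂ := w₂) h₁
  rcases Nat.lt_or_ge (w₁.length + 1) i with hi' | hi'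
  · omega
  have hi_ne : i ≠ w₁.length + 1 := by
    rintro rfl
    rw [getD_node_length_add_one] at hi
    exact Bool.false_ne_true hi
  have hj : w₁.length + 1 ≤ j → j = w₁.length + 1 := fun hj => by
    by_contra hj'
    have := hmid (w₁.length + 2) (by omega) (by omega)
    rw [hret] at this
    rcases Nat.eq_zero_or_pos i with rfl | hi0
    · rw [prefixHeight_zero] at this
      omega
    · have := hpos hi0 hi'
      omega
  rcases Nat.eq_zero_or_pos i with rfl | hi0
  · refine Or.inl ⟨rfl, hj ?_⟩
    by_contra hj'
    have := hpos (k := j + 1) (by omega) (by omega)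
    rw [prefixHeight_zero] at he
    omega
  · refine Or.inr (Or.inl ⟨hi0, ?_⟩)
    by_contra hj'
    have := hpos hi0 hi'
    rw [hj (by omega), add_assoc, hret] at he
    omega

lemma chords_node (h₁ : IsDyckWord w₁ n₁) :
    chords (true :: (w₁ ++ false :: w₂)) = insert (0, w₁.length + 1)
      ((chords w₁).map (shiftPair 1) ∪ (chords w₂).map (shiftPair (w₁.length + 2))) := by
  have hW : true :: (w₁ ++ false :: w₂) = true :: (w₁ ++ [false]) ++ w₂ := by simp
  have hlen : (true :: (w₁ ++ [false])).length = w₁.length + 2 := by simp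
  ext ⟨i, j⟩
  simp only [Finset.mem_insert, Finset.mem_union, Finset.mem_map, mem_chords, shiftPair_apply,
    Prod.mk.injEq, Prod.exists]
  constructor
  · intro hc
    rcases hc.node_cases h₁ with ⟨rfl, rfl⟩ | ⟨hi, hj⟩ | hi
    · exact Or.inl ⟨rfl, rfl⟩
    · obtain ⟨i, rfl⟩ := Nat.exists_eq_add_of_le' hi
      obtain ⟨j, rfl⟩ := Nat.exists_eq_add_of_le' (hi.trans hc.1)
      exact Or.inr (Or.inl ⟨i, j,
        (isChord_append_of_lt_length (by omega)).1 (isChord_cons_succ_iff.1 hc), rfl, rfl⟩)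
    · obtain ⟨i, rfl⟩ := Nat.exists_eq_add_of_le' hi
      obtain ⟨j, rfl⟩ := Nat.exists_eq_add_of_le' (hi.trans hc.1.le)
      rw [hW, ← hlen] at hc
      exact Or.inr (Or.inr ⟨i, j, isChord_append_add_length_iff.1 hc, rfl, rfl⟩)
  · rintro (⟨rfl, rfl⟩ | ⟨i, j, hc, rfl, rfl⟩ | ⟨i, j, hc, rfl, rfl⟩)
    · exact isChord_node_root h₁
    · exact isChord_cons_succ_iff.2 ((isChord_append_of_lt_length hc.2.1).2 hc)
    · rw [hW, ← hlen]
      exact isChord_append_add_length_iff.2 hc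

lemma root_notMem_chords_node : (0, w₁.length + 1) ∉
    (chords w₁).map (shiftPair 1) ∪ (chords w₂).map (shiftPair (w₁.length + 2)) := by
  simp only [Finset.mem_union, not_or]
  exact ⟨fun h => by have := bounds_of_mem_map_shiftPair_chords h; omega,
    fun h => by have := bounds_of_mem_map_shiftPair_chords h; omega⟩

lemma disjoint_map_shiftPair_chords :
    Disjoint ((chords w₁).map (shiftPair 1)) ((chords w₂).map (shiftPair (w₁.length + 2))) :=
  Finset.disjoint_left.2 fun p hp₁ hp₂ => by
    have := bounds_of_mem_map_shiftPair_chords hp₁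
    have := bounds_of_mem_map_shiftPair_chords hp₂
    omega

lemma chordLength_node_root (h₁ : IsDyckWord w₁ n₁) :
    chordLength (true :: (w₁ ++ false :: w₂)) (0, w₁.length + 1) = (chords w₁).card + 1 := by
  rw [chordLength, chords_node h₁, Finset.filter_insert, if_pos (by simp), Finset.filter_union,
    Finset.filter_true_of_mem fun p hp => ?_, Finset.filter_false_of_mem fun p hp => ?_,
    Finset.union_empty, Finset.card_insert_of_notMem, Finset.card_map]
  · exact fun h => by have := bounds_of_mem_map_shiftPair_chords h; omega
  · have := bounds_of_mem_map_shiftPair_chords hp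
    omega
  · have := bounds_of_mem_map_shiftPair_chords hp
    omega

lemma chordLength_node_shiftPair_one (h₁ : IsDyckWord w₁ n₁) {c : ℕ × ℕ} (hc : c ∈ chords w₁) :
    chordLength (true :: (w₁ ++ false :: w₂)) (shiftPair 1 c) = chordLength w₁ c := by
  have := (mem_chords.1 hc).2.1
  rw [chordLength, chords_node h₁, Finset.filter_insert, if_neg (by simp), Finset.filter_union,
    Finset.filter_false_of_mem (s := (chords w₂).map _) fun p hp => ?_, Finset.union_empty,
    Finset.filter_map, Finset.card_map, chordLength]
  · congr 1
    exact Finset.filter_congr fun p _ => by simp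
  · have := bounds_of_mem_map_shiftPair_chords hp
    simp only [shiftPair_apply]
    omega

lemma chordLength_node_shiftPair_length_add_two (h₁ : IsDyckWord w₁ n₁) (c : ℕ × ℕ) :
    chordLength (true :: (w₁ ++ false :: w₂)) (shiftPair (w₁.length + 2) c) = chordLength w₂ c := by
  rw [chordLength, chords_node h₁, Finset.filter_insert, if_neg (by simp), Finset.filter_union,
    Finset.filter_false_of_mem (s := (chords w₁).map _) fun p hp => ?_, Finset.empty_union,
    Finset.filter_map, Finset.card_map, chordLength]
  · congr 1
    exact Finset.filter_congr fun p _ => by simp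
  · have := bounds_of_mem_map_shiftPair_chords hp
    simp only [shiftPair_apply]
    omega

lemma IsDyckWord.card_chords {w : List Bool} {n : ℕ} (hw : IsDyckWord w n) :
    (chords w).card = n := by
  refine hw.induction (by simp [chords]) fun w₁ w₂ n₁ n₂ h₁ _ ih₁ ih₂ => ?_
  rw [chords_node h₁, Finset.card_insert_of_notMem root_notMem_chords_node,
    Finset.card_union_of_disjoint disjoint_map_shiftPair_chords, Finset.card_map,
    Finset.card_map, ih₁, ih₂]

lemma prod_chords_node {M : Type*} [CommMonoid M] (f : ℕ → M) (h₁ : IsDyckWord w₁ n₁) :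
    ∏ c ∈ chords (true :: (w₁ ++ false :: w₂)), f (chordLength (true :: (w₁ ++ false :: w₂)) c) =
      f (n₁ + 1) * ((∏ c ∈ chords w₁, f (chordLength w₁ c)) *
        ∏ c ∈ chords w₂, f (chordLength w₂ c)) := by
  rw [chords_node h₁, Finset.prod_insert root_notMem_chords_node,
    Finset.prod_union disjoint_map_shiftPair_chords, Finset.prod_map, Finset.prod_map,
    chordLength_node_root h₁, h₁.card_chords]
  congr 2
  · exact Finset.prod_congr rfl fun c hc => by rw [chordLength_node_shiftPair_one h₁ hc]
  · simp only [chordLength_node_shiftPair_length_add_two h₁]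

end Node

/-- For any Dyck path `λ` of size `n`, the product `∏_{c ∈ Chord(λ)} [l(c)]`
divides `[n]!` in `ℤ[q]`. -/
theorem prod_qInt_chordLength_dvd_qFact (n : ℕ) (w : List Bool) (hw : IsDyckWord w n) :
    (∏ c ∈ chords w, qIntP (chordLength w c)) ∣ qFactP n := by
  refine hw.induction (by simp [chords]) fun w₁ w₂ n₁ n₂ h₁ _ ih₁ ih₂ => ?_
  calc _ = qIntP (n₁ + 1) * ((∏ c ∈ chords w₁, qIntP (chordLength w₁ c)) *
          ∏ c ∈ chords w₂, qIntP (chordLength w₂ c)) := prod_chords_node qIntP h₁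
    _ ∣ qIntP (n₁ + 1) * (qFactP n₁ * qFactP n₂) := mul_dvd_mul_left _ (mul_dvd_mul ih₁ ih₂)
    _ = qFactP (n₁ + 1) * qFactP n₂ := by rw [qFactP_succ]; ring
    _ ∣ qFactP (n₁ + n₂ + 1) := add_right_comm n₁ n₂ 1 ▸ qFactP_mul_qFactP_dvd _ _
end

section
/- The generating function Q^B(M,N) := ∏_{1≤i≤N}(1+q^i) · ∏_{1≤j≤M} a_{(j,N)}, where a_{(2m−1,N)} = [N+2m]/[2m] and a_{(2m,N)} = [2N+2m]/[N+2m], is a polynomial in q with nonnegative integer coefficients for all M, N ≥ 0. -/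
/-- The `q`-integer `[n] = 1 + q + ⋯ + q^{n-1}` as an element of `ℚ(q)`. -/
noncomputable def qInt (n : ℕ) : RatFunc ℚ := ∑ i ∈ Finset.range n, RatFunc.X ^ i

/-- The factor `a_{(j,N)}`: for `j = 2m−1` it is `[N+2m]/[2m]` and for `j = 2m`
it is `[2N+2m]/[N+2m]`. -/
noncomputable def aB (j N : ℕ) : RatFunc ℚ :=
  if j % 2 = 1 then qInt (N + j + 1) / qInt (j + 1) else qInt (2 * N + j) / qInt (N + j)

/-- The generating function `Q^B(M,N) = ∏_{1≤i≤N}(1+qⁱ) · ∏_{1≤j≤M} a_{(j,N)}`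
of cover-inclusive ballot tilings above the path `D^M U^N`. -/
noncomputable def QB (M N : ℕ) : RatFunc ℚ :=
  (∏ i ∈ Finset.Icc 1 N, (1 + RatFunc.X ^ i)) * ∏ j ∈ Finset.Icc 1 M, aB j N

/-- The canonical embedding of `ℕ[q]` into `ℚ(q)`. -/
noncomputable def natPolyToRatFunc (p : Polynomial ℕ) : RatFunc ℚ :=
  algebraMap (Polynomial ℚ) (RatFunc ℚ) (p.map (Nat.castRingHom ℚ))

/-! Write `[n]` for `qInt n` and `P(N) = ∏_{1≤i≤N}(1+qⁱ)`. Since `a_{(2m+1,N)} a_{(2m+2,N)} = [2N+2m+2]/[2m+2]`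
and `[2n] = (1+qⁿ)[n]`, one gets the shift identity `Q^B(2m+2,N)·[2m+2] = Q^B(2m,N+1)·[N+1]`. Splitting the
numerators by `[a+b] = [a] + qᵃ[b]` then gives the Pascal-type recurrences
`Q^B(2m+1,N+1) = Q^B(2m,N+1) + q^{2m+2} Q^B(2m+2,N)` and
`Q^B(2m+2,N+1) = Q^B(2m+1,N+1) + q^{N+2m+3} Q^B(2m+2,N)`,
with `Q^B(0,N) = P(N)` and `Q^B(M,0) = 1`. Induction on `N`, then on `M`, keeps `Q^B` inside the
semiring of `ℕ`-polynomials. -/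

noncomputable def natPolyHom : Polynomial ℕ →+* RatFunc ℚ :=
  (algebraMap (Polynomial ℚ) (RatFunc ℚ)).comp (Polynomial.mapRingHom (Nat.castRingHom ℚ))

lemma natPolyHom_X : natPolyHom Polynomial.X = RatFunc.X := by
  simp [natPolyHom, RatFunc.algebraMap_X]

lemma X_mem_rangeS_natPolyHom : RatFunc.X ∈ natPolyHom.rangeS :=
  ⟨Polynomial.X, natPolyHom_X⟩

lemma qInt_ne_zero {n : ℕ} (hn : n ≠ 0) : qInt n ≠ 0 := by
  have hq : qInt n = algebraMap (Polynomial ℚ) (RatFunc ℚ) (∑ i ∈ Finset.range n, Polynomial.X ^ i) := by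
    simp [qInt, RatFunc.algebraMap_X]
  rw [hq]
  refine RatFunc.algebraMap_ne_zero fun h => hn ?_
  simpa [Polynomial.eval_finsetSum] using congrArg (Polynomial.eval 1) h

lemma qInt_add (a b : ℕ) : qInt (a + b) = qInt a + RatFunc.X ^ a * qInt b := by
  simp only [qInt, Finset.sum_range_add, Finset.mul_sum, pow_add]

lemma qInt_two_mul (n : ℕ) : qInt (2 * n) = (1 + RatFunc.X ^ n) * qInt n := by
  rw [two_mul, qInt_add]
  ring

lemma aB_two_mul_add_one (m N : ℕ) : aB (2 * m + 1) N = qInt (N + 2 * m + 2) / qInt (2 * m + 2) := by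
  rw [aB, if_pos (by omega)]
  ring_nf

lemma aB_two_mul_add_two (m N : ℕ) :
    aB (2 * m + 2) N = qInt (2 * N + 2 * m + 2) / qInt (N + 2 * m + 2) := by
  rw [aB, if_neg (by omega)]
  ring_nf

lemma QB_zero_left (N : ℕ) : QB 0 N = ∏ i ∈ Finset.Icc 1 N, (1 + RatFunc.X ^ i) := by
  simp [QB]

lemma QB_zero_right (M : ℕ) : QB M 0 = 1 := by
  rw [QB, Finset.Icc_eq_empty (by omega), Finset.prod_empty, one_mul]
  refine Finset.prod_eq_one fun j hj => ?_
  have hj : j ≠ 0 := by grind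
  rw [aB]
  split_ifs
  · simpa using div_self (qInt_ne_zero j.succ_ne_zero)
  · simpa using div_self (qInt_ne_zero hj)

lemma QB_succ_left (M N : ℕ) : QB (M + 1) N = QB M N * aB (M + 1) N := by
  rw [QB, QB, Finset.prod_Icc_succ_top (by omega), mul_assoc]

lemma QB_two_mul_add_one (m N : ℕ) :
    QB (2 * m + 1) N = QB (2 * m) N * (qInt (N + 2 * m + 2) / qInt (2 * m + 2)) := by
  rw [QB_succ_left, aB_two_mul_add_one]

lemma QB_two_mul_add_two (m N : ℕ) :
    QB (2 * m + 2) N = QB (2 * m) N * (qInt (2 * N + 2 * m + 2) / qInt (2 * m + 2)) := by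
  have := qInt_ne_zero (n := N + 2 * m + 2) (by omega)
  rw [QB_succ_left, QB_two_mul_add_one, aB_two_mul_add_two]
  field_simp

lemma QB_two_mul_add_two_mul_qInt (m N : ℕ) :
    QB (2 * m + 2) N * qInt (2 * m + 2) = QB (2 * m) (N + 1) * qInt (N + 1) := by
  induction m with
  | zero =>
    have := qInt_ne_zero (n := 2) (by omega)
    rw [QB_two_mul_add_two, QB_zero_left, QB_zero_left, Finset.prod_Icc_succ_top (by omega),
      show 2 * N + 2 * 0 + 2 = 2 * (N + 1) by ring, qInt_two_mul]
    field_simp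
  | succ m ih =>
    have := qInt_ne_zero (n := 2 * m + 2) (by omega)
    have := qInt_ne_zero (n := 2 * m + 2 + 2) (by omega)
    have hN := QB_two_mul_add_two (m + 1) N
    rw [show 2 * (m + 1) = 2 * m + 2 by ring] at hN ⊢
    rw [hN, QB_two_mul_add_two m (N + 1), show 2 * N + (2 * m + 2) + 2 = 2 * (N + 1) + 2 * m + 2 by ring]
    field_simp
    linear_combination qInt (2 * (N + 1) + 2 * m + 2) * ih

lemma QB_two_mul_add_one_succ (m N : ℕ) :
    QB (2 * m + 1) (N + 1) = QB (2 * m) (N + 1) + RatFunc.X ^ (2 * m + 2) * QB (2 * m + 2) N := by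
  have := qInt_ne_zero (n := 2 * m + 2) (by omega)
  have hshift := QB_two_mul_add_two_mul_qInt m N
  rw [QB_two_mul_add_one, show N + 1 + 2 * m + 2 = 2 * m + 2 + (N + 1) by ring, qInt_add]
  field_simp
  linear_combination -RatFunc.X ^ (2 * m + 2) * hshift

lemma QB_two_mul_add_two_succ (m N : ℕ) :
    QB (2 * m + 2) (N + 1)
      = QB (2 * m + 1) (N + 1) + RatFunc.X ^ (N + 2 * m + 3) * QB (2 * m + 2) N := by
  have := qInt_ne_zero (n := 2 * m + 2) (by omega)
  have hshift := QB_two_mul_add_two_mul_qInt m N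
  rw [QB_two_mul_add_two, QB_two_mul_add_one, show N + 1 + 2 * m + 2 = N + 2 * m + 3 by ring,
    show 2 * (N + 1) + 2 * m + 2 = N + 2 * m + 3 + (N + 1) by ring, qInt_add]
  field_simp
  linear_combination -RatFunc.X ^ (N + 2 * m + 3) * hshift

lemma QB_mem_rangeS_natPolyHom (M N : ℕ) : QB M N ∈ natPolyHom.rangeS := by
  have hX := X_mem_rangeS_natPolyHom
  induction N generalizing M with
  | zero => simp [QB_zero_right]
  | succ N ihN =>
    induction M with
    | zero =>
      rw [QB_zero_left]
      exact prod_mem fun i _ => add_mem (one_mem _) (pow_mem hX i)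
    | succ M ihM =>
      obtain ⟨m, rfl | rfl⟩ := M.even_or_odd'
      · rw [QB_two_mul_add_one_succ]
        exact add_mem ihM (mul_mem (pow_mem hX _) (ihN _))
      · rw [show 2 * m + 1 + 1 = 2 * m + 2 by ring, QB_two_mul_add_two_succ]
        exact add_mem ihM (mul_mem (pow_mem hX _) (ihN _))

/-- For all `M, N ≥ 0`, the generating function `Q^B(M,N)` is a polynomial in `q`
with nonnegative integer coefficients. -/
theorem QB_is_natPoly (M N : ℕ) : ∃ p : Polynomial ℕ, QB M N = natPolyToRatFunc p := by
  obtain ⟨p, hp⟩ := QB_mem_rangeS_natPolyHom M N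
  exact ⟨p, hp.symm⟩
end
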